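/- Let g ∈ SL(V) with Cartan decomposition data X_g^M = ℝ(k_g e₁) ∈ P(V) and Y_g^m = ℝ(ᵗl_g e₁*) ∈ P(V*). Then for every X ∈ P(V), d(gX, X_g^M) · δ(X, Y_g^m) ≤ κ_{1,2}(g), where κ_{1,2}(g) = κ₂(g)/κ₁(g). -/

import Mathlib

/-! Both sides are invariant under the orthogonal factors `k` and `l`, so it suffices to treat
`z = diag(a) y` against the direction `e₁`. The sine of the angle between `z` and `e₁` is
`√(‖z‖² - z₁²) / ‖z‖ ≤ a₂ ‖y‖ / ‖z‖`, since every coordinate other than the first is scaled by at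
most `a₂`, while `‖z‖ ≥ a₁ |y₁|`; multiplying by `|y₁| / ‖y‖` gives `a₂ / a₁`. -/

noncomputable section

open scoped RealInnerProductSpace

def op {d : ℕ} (g : Matrix (Fin d) (Fin d) ℝ) :
    EuclideanSpace ℝ (Fin d) →L[ℝ] EuclideanSpace ℝ (Fin d) :=
  Matrix.toEuclideanCLM (𝕜 := ℝ) g

/-- `d(ℝx, ℝy) = ‖x ∧ y‖ / (‖x‖‖y‖)`, written via Lagrange's identity
`‖x ∧ y‖² = ‖x‖²‖y‖² - ⟪x, y⟫²`. -/
def projDist {d : ℕ} (x y : EuclideanSpace ℝ (Fin d)) : ℝ :=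
  Real.sqrt (‖x‖ ^ 2 * ‖y‖ ^ 2 - ⟪x, y⟫ ^ 2) / (‖x‖ * ‖y‖)

open Matrix EuclideanSpace

section

variable {d : ℕ}

lemma op_mem_unitary {u : Matrix (Fin d) (Fin d) ℝ} (hu : u ∈ orthogonalGroup (Fin d) ℝ) :
    op u ∈ unitary (EuclideanSpace ℝ (Fin d) →L[ℝ] EuclideanSpace ℝ (Fin d)) :=
  Unitary.map_mem _ hu

lemma op_diagonal_apply (a : Fin d → ℝ) (y : EuclideanSpace ℝ (Fin d)) (i : Fin d) :
    op (diagonal a) y i = a i * y i := by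
  simp [op, mulVec_diagonal]

lemma projDist_map_of_mem_unitary
    {u : EuclideanSpace ℝ (Fin d) →L[ℝ] EuclideanSpace ℝ (Fin d)}
    (hu : u ∈ unitary (EuclideanSpace ℝ (Fin d) →L[ℝ] EuclideanSpace ℝ (Fin d)))
    (x y : EuclideanSpace ℝ (Fin d)) : projDist (u x) (u y) = projDist x y := by
  rw [projDist, projDist, u.norm_map_of_mem_unitary hu, u.norm_map_of_mem_unitary hu,
    u.inner_map_map_of_mem_unitary hu]

lemma projDist_single_right (z : EuclideanSpace ℝ (Fin d)) (i : Fin d) :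
    projDist z (single i 1) = √(‖z‖ ^ 2 - z i ^ 2) / ‖z‖ := by
  simp [projDist, inner_single_right]

lemma norm_sq_sub_sq_apply_diagonal_le (a : Fin d → ℝ) (y : EuclideanSpace ℝ (Fin d))
    (i : Fin d) {b : ℝ} (hb : ∀ j ≠ i, |a j| ≤ b) :
    ‖op (diagonal a) y‖ ^ 2 - op (diagonal a) y i ^ 2 ≤ b ^ 2 * ‖y‖ ^ 2 := by
  calc ‖op (diagonal a) y‖ ^ 2 - op (diagonal a) y i ^ 2
      = ∑ j ∈ Finset.univ.erase i, (a j * y j) ^ 2 := by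
        simp only [norm_sq_eq, op_diagonal_apply, Real.norm_eq_abs, sq_abs,
          ← Finset.add_sum_erase _ _ (Finset.mem_univ i), add_sub_cancel_left]
    _ ≤ ∑ j ∈ Finset.univ.erase i, b ^ 2 * y j ^ 2 := by
        refine Finset.sum_le_sum fun j hj => ?_
        rw [mul_pow, ← sq_abs (a j)]
        gcongr
        exact hb j (Finset.ne_of_mem_erase hj)
    _ ≤ b ^ 2 * ‖y‖ ^ 2 := by
        simp only [← Finset.mul_sum, norm_sq_eq, Real.norm_eq_abs, sq_abs]
        gcongr
        exact Finset.erase_subset _ _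

lemma projDist_diagonal_single_mul_le (a : Fin d → ℝ) (y : EuclideanSpace ℝ (Fin d))
    (i : Fin d) {b : ℝ} (hb0 : 0 ≤ b) (hb : ∀ j ≠ i, |a j| ≤ b) (hmax : ∀ j, |a j| ≤ |a i|) :
    projDist (op (diagonal a) y) (single i 1) * (|y i| / ‖y‖) ≤ b / |a i| := by
  set z := op (diagonal a) y
  rw [projDist_single_right]
  rcases eq_or_ne (y i) 0 with hyi | hyi
  · simp only [hyi, abs_zero, zero_div, mul_zero]
    positivity
  rcases eq_or_ne (a i) 0 with hai | hai
  · have hz : z = 0 := by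
      ext j
      have haj : a j = 0 := abs_nonpos_iff.mp (by simpa [hai] using hmax j)
      simp [z, op_diagonal_apply, haj]
    simp only [hz, norm_zero, div_zero, zero_mul]
    positivity
  have hzi : |a i| * |y i| ≤ ‖z‖ := by
    simpa [z, op_diagonal_apply, abs_mul] using PiLp.norm_apply_le z i
  have hperp : √(‖z‖ ^ 2 - z i ^ 2) ≤ b * ‖y‖ :=
    Real.sqrt_le_iff.mpr ⟨by positivity, by
      simpa [mul_pow] using norm_sq_sub_sq_apply_diagonal_le a y i hb⟩
  have hy : 0 < ‖y‖ := (abs_pos.mpr hyi).trans_le (by simpa using PiLp.norm_apply_le y i)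
  have hz : 0 < ‖z‖ := (by positivity : 0 < |a i| * |y i|).trans_le hzi
  rw [div_mul_div_comm, div_le_div_iff₀ (by positivity) (abs_pos.mpr hai)]
  calc √(‖z‖ ^ 2 - z i ^ 2) * |y i| * |a i| = √(‖z‖ ^ 2 - z i ^ 2) * (|a i| * |y i|) := by ring
    _ ≤ b * ‖y‖ * ‖z‖ := by gcongr
    _ = b * (‖z‖ * ‖y‖) := by ring

end

/-- `X_g^M = ℝ (k e₁)` and `Y_g^m = ℝ (ᵗl e₁*)`, so `δ(ℝx, Y_g^m) = |(l x)₁| / ‖x‖`. -/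
theorem stmt2 {d : ℕ} (hd : 2 ≤ d)
    (g k l : Matrix (Fin d) (Fin d) ℝ) (a : Fin d → ℝ)
    (hk : k ∈ Matrix.orthogonalGroup (Fin d) ℝ)
    (hl : l ∈ Matrix.orthogonalGroup (Fin d) ℝ)
    (hdecomp : g = k * Matrix.diagonal a * l)
    (hmono : ∀ i j : Fin d, i ≤ j → a j ≤ a i)
    (hpos : ∀ i, 0 ≤ a i)
    (x : EuclideanSpace ℝ (Fin d)) :
    projDist (op g x) (op k (EuclideanSpace.single ⟨0, by omega⟩ 1)) *
        (|op l x ⟨0, by omega⟩| / ‖x‖)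
      ≤ a ⟨1, by omega⟩ / a ⟨0, by omega⟩ := by
  have hgx : op g x = op k (op (diagonal a) (op l x)) := by
    simp [hdecomp, op, map_mul]
  rw [hgx, projDist_map_of_mem_unitary (op_mem_unitary hk),
    ← (op l).norm_map_of_mem_unitary (op_mem_unitary hl) x]
  refine (projDist_diagonal_single_mul_le a (op l x) _ (hpos _) (fun j hj => ?_)
    (fun j => ?_)).trans_eq (by rw [abs_of_nonneg (hpos _)])
  · rw [abs_of_nonneg (hpos j)]
    exact hmono _ _ (Fin.le_def.mpr (Nat.one_le_iff_ne_zero.mpr (Fin.val_ne_iff.mpr hj)))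
  · rw [abs_of_nonneg (hpos j), abs_of_nonneg (hpos _)]
    exact hmono _ _ (Fin.mk_le_mk.mpr (Nat.zero_le _))
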